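/- arXiv:2412.05522 — 2 statements merged into one kernel-verified Lean document; each statement's English description precedes it below -/
import Mathlib

section
/- Let G be a simple graph on n vertices, let t ≥ 2 be an integer, and let c = (c_i)_{i≥1} be a cost vector of nonnegative reals. Then there exists a complete multipartite graph H on n vertices such that θ*_t(G, c) ≤ θ*_t(H, c). -/
open scoped Classical
open Finset

/-- `K` is a clique of `G`: a nonempty set of pairwise adjacent vertices. -/
def IsCliqueOf {V : Type} [Fintype V] [DecidableEq V] (G : SimpleGraph V) (K : Finset V) : Prop :=
  K.Nonempty ∧ G.IsClique (K : Set V)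

/-- Total `c`-cost of a weighting `f` of the finsets of vertices. -/
noncomputable def cliqueCost {V : Type} [Fintype V] [DecidableEq V]
    (c : ℕ → ℝ) (f : Finset V → ℝ) : ℝ :=
  ∑ K : Finset V, c K.card * f K

/-- `f` is a fractional `t`-clique cover of `G`. -/
def IsFracCover {V : Type} [Fintype V] [DecidableEq V]
    (t : ℕ) (G : SimpleGraph V) (f : Finset V → ℝ) : Prop :=
  (∀ K, 0 ≤ f K) ∧ (∀ K, ¬ IsCliqueOf G K → f K = 0) ∧
  ∀ T : Finset V, T.card = t → G.IsClique (T : Set V) →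
    1 ≤ ∑ K ∈ Finset.univ.filter (fun K => T ⊆ K), f K

/-- `f` is a fractional `t`-clique decomposition of `G`. -/
def IsFracDecomp {V : Type} [Fintype V] [DecidableEq V]
    (t : ℕ) (G : SimpleGraph V) (f : Finset V → ℝ) : Prop :=
  (∀ K, 0 ≤ f K) ∧ (∀ K, ¬ IsCliqueOf G K → f K = 0) ∧
  ∀ T : Finset V, T.card = t → G.IsClique (T : Set V) →
    ∑ K ∈ Finset.univ.filter (fun K => T ⊆ K), f K = 1

/-- `f` is an integer (`{0,1}`-valued) `t`-clique cover of `G`. -/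
def IsIntCover {V : Type} [Fintype V] [DecidableEq V]
    (t : ℕ) (G : SimpleGraph V) (f : Finset V → ℝ) : Prop :=
  IsFracCover t G f ∧ ∀ K, f K = 0 ∨ f K = 1

/-- `f` is an integer (`{0,1}`-valued) `t`-clique decomposition of `G`. -/
def IsIntDecomp {V : Type} [Fintype V] [DecidableEq V]
    (t : ℕ) (G : SimpleGraph V) (f : Finset V → ℝ) : Prop :=
  IsFracDecomp t G f ∧ ∀ K, f K = 0 ∨ f K = 1

/-- θ*_t(G,c): minimum total c-cost of a fractional t-clique cover. -/
noncomputable def thetaFrac {V : Type} [Fintype V] [DecidableEq V]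
    (t : ℕ) (G : SimpleGraph V) (c : ℕ → ℝ) : ℝ :=
  sInf { x | ∃ f, IsFracCover t G f ∧ x = cliqueCost c f }

/-- θ_t(G,c): minimum total c-cost of an integer t-clique cover. -/
noncomputable def thetaInt {V : Type} [Fintype V] [DecidableEq V]
    (t : ℕ) (G : SimpleGraph V) (c : ℕ → ℝ) : ℝ :=
  sInf { x | ∃ f, IsIntCover t G f ∧ x = cliqueCost c f }

/-- π*_t(G,c): minimum total c-cost of a fractional t-clique decomposition. -/
noncomputable def piFrac {V : Type} [Fintype V] [DecidableEq V]
    (t : ℕ) (G : SimpleGraph V) (c : ℕ → ℝ) : ℝ :=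
  sInf { x | ∃ f, IsFracDecomp t G f ∧ x = cliqueCost c f }

/-- π_t(G,c): minimum total c-cost of an integer t-clique decomposition. -/
noncomputable def piInt {V : Type} [Fintype V] [DecidableEq V]
    (t : ℕ) (G : SimpleGraph V) (c : ℕ → ℝ) : ℝ :=
  sInf { x | ∃ f, IsIntDecomp t G f ∧ x = cliqueCost c f }

/-- `G` is complete multipartite: vertices can be assigned to parts so that
adjacency holds exactly between distinct parts. -/
def IsCompleteMultipartite {V : Type} [Fintype V] [DecidableEq V]
    (G : SimpleGraph V) : Prop :=
  ∃ p : V → ℕ, ∀ u v, G.Adj u v ↔ p u ≠ p v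

/-!
Zykov symmetrization. If `G` is not complete multipartite, it has non-adjacent vertices `u`, `v`
with different neighbourhoods, and the set `S` of vertices sharing the neighbourhood of `u` or of
`v` is independent. Making every vertex of `S` a twin of one `x ∈ S` does not decrease `θ*_t` for
the best choice of `x`: given covers `g x` of the symmetrized graphs, push each `g x` forward along
the map moving the (unique) `S`-vertex of a clique onto `x`, and average over `x ∈ S`. This costs
the average of the costs, and a `t`-clique `T` of `G` through `x ∈ S` is covered `|S|` times by
`g x` alone, once through each of the `t`-cliques `insert y (T.erase x)`, `y ∈ S`. Every step
lowers the number of distinct neighbourhoods, so the process ends at a complete multipartite graph.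
-/

namespace SimpleGraph

variable {V : Type*} {G : SimpleGraph V} {S : Finset V} {x a b : V}

def zykovSymm (G : SimpleGraph V) (S : Finset V) (x : V) : SimpleGraph V where
  Adj a b := (a ∉ S ∧ b ∉ S ∧ G.Adj a b) ∨ (a ∈ S ∧ b ∉ S ∧ G.Adj x b) ∨
    (a ∉ S ∧ b ∈ S ∧ G.Adj a x)
  symm := ⟨by
    rintro a b (⟨ha, hb, h⟩ | ⟨ha, hb, h⟩ | ⟨ha, hb, h⟩)
    · exact Or.inl ⟨hb, ha, h.symm⟩
    · exact Or.inr (Or.inr ⟨hb, ha, h.symm⟩)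
    · exact Or.inr (Or.inl ⟨hb, ha, h.symm⟩)⟩
  loopless := ⟨by
    rintro a (⟨-, -, h⟩ | ⟨ha, ha', -⟩ | ⟨ha, ha', -⟩)
    · exact G.irrefl h
    · exact ha' ha
    · exact ha ha'⟩

lemma zykovSymm_adj_of_notMem (ha : a ∉ S) (hb : b ∉ S) :
    (G.zykovSymm S x).Adj a b ↔ G.Adj a b := by
  simp [zykovSymm, ha, hb]

lemma zykovSymm_adj_of_mem (ha : a ∈ S) : (G.zykovSymm S x).Adj a b ↔ b ∉ S ∧ G.Adj x b := by
  simp [zykovSymm, ha]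

lemma zykovSymm_adj_of_notMem_of_mem (ha : a ∉ S) (hb : b ∈ S) :
    (G.zykovSymm S x).Adj a b ↔ G.Adj a x := by
  simp [zykovSymm, ha, hb]

lemma eq_of_isClique_zykovSymm {K : Set V} (hK : (G.zykovSymm S x).IsClique K)
    (ha : a ∈ K) (hb : b ∈ K) (haS : a ∈ S) (hbS : b ∈ S) : a = b := by
  by_contra hab
  exact ((zykovSymm_adj_of_mem haS).1 (hK ha hb hab)).1 hbS

lemma isClique_zykovSymm_iff_of_disjoint {K : Set V} (hK : Disjoint K S) :
    (G.zykovSymm S x).IsClique K ↔ G.IsClique K := by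
  refine forall₂_congr fun a ha => forall₂_congr fun b hb => imp_congr_right fun _ => ?_
  exact zykovSymm_adj_of_notMem (hK.notMem_of_mem_left ha) (hK.notMem_of_mem_left hb)

lemma not_adj_of_neighborSet_eq {u v : V} (huv : ¬ G.Adj u v)
    (ha : G.neighborSet a = G.neighborSet u ∨ G.neighborSet a = G.neighborSet v)
    (hb : G.neighborSet b = G.neighborSet u ∨ G.neighborSet b = G.neighborSet v) :
    ¬ G.Adj a b := by
  intro hab
  obtain ⟨p, hp, hpb⟩ : ∃ p, (p = u ∨ p = v) ∧ G.Adj p b := by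
    rcases ha with h | h
    exacts [⟨u, Or.inl rfl, show b ∈ G.neighborSet u from h ▸ hab⟩,
      ⟨v, Or.inr rfl, show b ∈ G.neighborSet v from h ▸ hab⟩]
  obtain ⟨q, hq, hqp⟩ : ∃ q, (q = u ∨ q = v) ∧ G.Adj q p := by
    rcases hb with h | h
    exacts [⟨u, Or.inl rfl, show p ∈ G.neighborSet u from h ▸ hpb.symm⟩,
      ⟨v, Or.inr rfl, show p ∈ G.neighborSet v from h ▸ hpb.symm⟩]
  rcases hp with rfl | rfl <;> rcases hq with rfl | rfl
  exacts [G.irrefl hqp, huv hqp.symm, huv hqp, G.irrefl hqp]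

end SimpleGraph

section Fold

open SimpleGraph

variable {V : Type} [DecidableEq V] {G : SimpleGraph V} {S K T : Finset V} {x y : V}

def foldOnto (S : Finset V) (x : V) (K : Finset V) : Finset V :=
  if Disjoint K S then K else insert x (K \ S)

lemma card_foldOnto (hx : x ∈ S) (hK : ∀ a ∈ K, ∀ b ∈ K, a ∈ S → b ∈ S → a = b) :
    (foldOnto S x K).card = K.card := by
  unfold foldOnto
  split_ifs with hKS
  · rfl
  obtain ⟨y, hyK, hyS⟩ := not_disjoint_iff.1 hKS
  have hsdiff : K \ S = K.erase y := by
    ext z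
    simp only [mem_sdiff, mem_erase]
    exact ⟨fun ⟨hz, hzS⟩ => ⟨fun h => hzS (h ▸ hyS), hz⟩,
      fun ⟨hzy, hz⟩ => ⟨hz, fun hzS => hzy (hK z hz y hyK hzS hyS)⟩⟩
  have hxK : x ∉ K \ S := fun h => (mem_sdiff.1 h).2 hx
  rw [card_insert_of_notMem hxK, hsdiff, card_erase_add_one hyK]

lemma subset_foldOnto_of_disjoint (hT : Disjoint T S) (hTK : T ⊆ K) : T ⊆ foldOnto S x K := by
  unfold foldOnto
  split_ifs
  · exact hTK
  · exact (subset_sdiff.2 ⟨hTK, hT⟩).trans (subset_insert x _)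

lemma subset_foldOnto_of_insert_erase_subset (hy : y ∈ S) (hT : Disjoint (T.erase x) S)
    (hTK : insert y (T.erase x) ⊆ K) : T ⊆ foldOnto S x K := by
  have hKS : ¬ Disjoint K S :=
    not_disjoint_iff.2 ⟨y, hTK (mem_insert_self y _), hy⟩
  rw [foldOnto, if_neg hKS]
  refine (insert_erase_subset x T).trans (insert_subset_insert x ?_)
  exact subset_sdiff.2 ⟨(subset_insert y _).trans hTK, hT⟩

lemma isCliqueOf_foldOnto [Fintype V] (hK : IsCliqueOf (G.zykovSymm S x) K) :
    IsCliqueOf G (foldOnto S x K) := by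
  unfold foldOnto
  split_ifs with hKS
  · exact ⟨hK.1, (isClique_zykovSymm_iff_of_disjoint (disjoint_coe.2 hKS)).1 hK.2⟩
  obtain ⟨y, hyK, hyS⟩ := not_disjoint_iff.1 hKS
  refine ⟨insert_nonempty _ _, ?_⟩
  rw [coe_insert, isClique_insert, coe_sdiff]
  constructor
  · refine (isClique_zykovSymm_iff_of_disjoint (x := x) Set.disjoint_sdiff_left).1 ?_
    exact hK.2.subset Set.sdiff_subset
  · intro b hb _
    have hyb : y ≠ b := fun h => hb.2 (h ▸ hyS)
    exact ((zykovSymm_adj_of_mem hyS).1 (hK.2 hyK hb.1 hyb)).2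

end Fold

section Pushforward

variable {V : Type} [Fintype V] [DecidableEq V] {φ : Finset V → Finset V} {g : Finset V → ℝ}

noncomputable def pushforward (φ : Finset V → Finset V) (g : Finset V → ℝ) (K : Finset V) : ℝ :=
  ∑ K' ∈ univ.filter (fun K' => φ K' = K), g K'

lemma pushforward_nonneg (hg : ∀ K, 0 ≤ g K) (K : Finset V) : 0 ≤ pushforward φ g K :=
  sum_nonneg fun _ _ => hg _

lemma pushforward_eq_zero {K : Finset V} (h : ∀ K', g K' ≠ 0 → φ K' ≠ K) :
    pushforward φ g K = 0 :=
  sum_eq_zero fun K' hK' => by_contra fun hg => h K' hg (mem_filter.1 hK').2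

lemma sum_mul_pushforward (w : Finset V → ℝ) :
    ∑ K, w K * pushforward φ g K = ∑ K, w (φ K) * g K := by
  simp_rw [pushforward, mul_sum]
  rw [← sum_fiberwise univ φ (fun K => w (φ K) * g K)]
  exact sum_congr rfl fun K _ => sum_congr rfl fun K' hK' => by rw [(mem_filter.1 hK').2]

lemma sum_filter_subset_pushforward (T : Finset V) :
    ∑ K ∈ univ.filter (fun K => T ⊆ K), pushforward φ g K =
      ∑ K ∈ univ.filter (fun K => T ⊆ φ K), g K := by
  simpa only [sum_filter, ite_mul, one_mul, zero_mul] using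
    sum_mul_pushforward (φ := φ) (g := g) (fun K => if T ⊆ K then 1 else 0)

lemma cliqueCost_pushforward (c : ℕ → ℝ) (h : ∀ K, g K ≠ 0 → (φ K).card = K.card) :
    cliqueCost c (pushforward φ g) = cliqueCost c g := by
  rw [cliqueCost, sum_mul_pushforward (fun K => c K.card)]
  refine sum_congr rfl fun K _ => ?_
  by_cases hK : g K = 0
  · simp [hK]
  · rw [h K hK]

end Pushforward

section FoldCover

open SimpleGraph

variable {V : Type} [Fintype V] [DecidableEq V] {G : SimpleGraph V} {S T : Finset V} {x : V}
  {t : ℕ}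

lemma one_le_sum_foldOnto_of_disjoint {g : Finset V → ℝ}
    (hg : IsFracCover t (G.zykovSymm S x) g) (hTt : T.card = t) (hT : G.IsClique (T : Set V))
    (hTS : Disjoint T S) : 1 ≤ ∑ K ∈ univ.filter (fun K => T ⊆ foldOnto S x K), g K :=
  (hg.2.2 T hTt ((isClique_zykovSymm_iff_of_disjoint (disjoint_coe.2 hTS)).2 hT)).trans <|
    sum_le_sum_of_subset_of_nonneg
      (monotone_filter_right _ fun _ _ => subset_foldOnto_of_disjoint hTS) fun K _ _ => hg.1 K

lemma card_le_sum_foldOnto_of_mem {g : Finset V → ℝ} (hg : IsFracCover t (G.zykovSymm S x) g)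
    (hTt : T.card = t) (hT : G.IsClique (T : Set V)) (hxT : x ∈ T)
    (hTS : Disjoint (T.erase x) S) :
    (S.card : ℝ) ≤ ∑ K ∈ univ.filter (fun K => T ⊆ foldOnto S x K), g K := by
  have hcover : ∀ y ∈ S, 1 ≤ ∑ K ∈ univ.filter (fun K => insert y (T.erase x) ⊆ K), g K := by
    intro y hy
    refine hg.2.2 _ ?_ ?_
    · rw [card_insert_of_notMem fun h => disjoint_left.1 hTS h hy, card_erase_add_one hxT, hTt]
    · rw [coe_insert, isClique_insert]
      refine ⟨(isClique_zykovSymm_iff_of_disjoint (disjoint_coe.2 hTS)).2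
        (hT.subset (coe_subset.2 (erase_subset x T))), fun b hb _ => ?_⟩
      have hb' := mem_erase.1 (mem_coe.1 hb)
      exact (zykovSymm_adj_of_mem hy).2 ⟨disjoint_left.1 hTS hb, hT hxT hb'.2 (Ne.symm hb'.1)⟩
  -- A clique of the symmetrized graph contains at most one vertex of `S`.
  have hfiber : ∀ K, ∑ y ∈ S, (if insert y (T.erase x) ⊆ K then g K else 0) ≤
      if T ⊆ foldOnto S x K then g K else 0 := by
    intro K
    by_cases hy : ∃ y ∈ S, insert y (T.erase x) ⊆ K
    · obtain ⟨y, hyS, hyK⟩ := hy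
      rw [sum_eq_single_of_mem y hyS, if_pos hyK,
        if_pos (subset_foldOnto_of_insert_erase_subset hyS hTS hyK)]
      intro z hzS hzy
      refine ite_eq_right_iff.2 fun hzK => hg.2.1 K fun hK => hzy ?_
      exact eq_of_isClique_zykovSymm hK.2 (mem_coe.2 (hzK (mem_insert_self z _)))
        (mem_coe.2 (hyK (mem_insert_self y _))) hzS hyS
    · push Not at hy
      rw [sum_eq_zero fun y hyS => if_neg (hy y hyS)]
      split_ifs
      exacts [hg.1 K, le_rfl]
  calc (S.card : ℝ) = ∑ y ∈ S, 1 := by simp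
    _ ≤ ∑ y ∈ S, ∑ K ∈ univ.filter (fun K => insert y (T.erase x) ⊆ K), g K := sum_le_sum hcover
    _ = ∑ K, ∑ y ∈ S, (if insert y (T.erase x) ⊆ K then g K else 0) := by
      simp_rw [sum_filter]
      exact sum_comm
    _ ≤ ∑ K, if T ⊆ foldOnto S x K then g K else 0 := sum_le_sum fun K _ => hfiber K
    _ = _ := (sum_filter _ _).symm

variable {g : V → Finset V → ℝ}

noncomputable def foldAverage (S : Finset V) (g : V → Finset V → ℝ) (K : Finset V) : ℝ :=
  (S.card : ℝ)⁻¹ * ∑ x ∈ S, pushforward (foldOnto S x) (g x) K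

lemma isFracCover_foldAverage (hS : S.Nonempty) (hind : ∀ a ∈ S, ∀ b ∈ S, ¬ G.Adj a b)
    (hg : ∀ x ∈ S, IsFracCover t (G.zykovSymm S x) (g x)) :
    IsFracCover t G (foldAverage S g) := by
  have hSpos : (0 : ℝ) < S.card := by exact_mod_cast hS.card_pos
  refine ⟨fun K => mul_nonneg (by positivity)
    (sum_nonneg fun x hx => pushforward_nonneg (hg x hx).1 K), fun K hK => ?_, fun T hTt hT => ?_⟩
  · refine mul_eq_zero_of_right _ (sum_eq_zero fun x hx => pushforward_eq_zero ?_)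
    intro K' hK' hKK'
    exact hK (hKK' ▸ isCliqueOf_foldOnto (not_not.1 (mt ((hg x hx).2.1 K') hK')))
  have hsum : ∑ K ∈ univ.filter (fun K => T ⊆ K), foldAverage S g K =
      (S.card : ℝ)⁻¹ * ∑ x ∈ S, ∑ K ∈ univ.filter (fun K => T ⊆ foldOnto S x K), g x K := by
    simp_rw [foldAverage, ← mul_sum, ← sum_filter_subset_pushforward]
    rw [sum_comm]
  rw [hsum, le_inv_mul_iff₀ hSpos, mul_one]
  by_cases hTS : Disjoint T S
  · calc (S.card : ℝ) = ∑ x ∈ S, 1 := by simp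
      _ ≤ _ := sum_le_sum fun x hx => one_le_sum_foldOnto_of_disjoint (hg x hx) hTt hT hTS
  obtain ⟨x, hxT, hxS⟩ := not_disjoint_iff.1 hTS
  have hTS' : Disjoint (T.erase x) S := disjoint_left.2 fun b hb hbS =>
    hind x hxS b hbS (hT hxT (mem_erase.1 hb).2 (Ne.symm (mem_erase.1 hb).1))
  exact (card_le_sum_foldOnto_of_mem (hg x hxS) hTt hT hxT hTS').trans
    (single_le_sum (f := fun y => ∑ K ∈ univ.filter (fun K => T ⊆ foldOnto S y K), g y K)
      (fun y hy => sum_nonneg fun K _ => (hg y hy).1 K) hxS)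

lemma cliqueCost_foldAverage (c : ℕ → ℝ) (hg : ∀ x ∈ S, IsFracCover t (G.zykovSymm S x) (g x)) :
    cliqueCost c (foldAverage S g) = (S.card : ℝ)⁻¹ * ∑ x ∈ S, cliqueCost c (g x) := by
  have hpush : ∀ x ∈ S, cliqueCost c (pushforward (foldOnto S x) (g x)) = cliqueCost c (g x) :=
    fun x hx => cliqueCost_pushforward c fun K hK =>
      card_foldOnto hx fun a ha b hb => eq_of_isClique_zykovSymm
        (not_not.1 (mt ((hg x hx).2.1 K) hK)).2 (mem_coe.2 ha) (mem_coe.2 hb)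
  rw [← sum_congr rfl hpush]
  simp only [cliqueCost, foldAverage, mul_sum]
  rw [sum_comm]
  exact sum_congr rfl fun _ _ => sum_congr rfl fun _ _ => by ring

end FoldCover

section Theta

variable {V : Type} [Fintype V] [DecidableEq V] {G : SimpleGraph V} {t : ℕ} {c : ℕ → ℝ}

lemma cliqueCost_nonneg (hc : ∀ i, 1 ≤ i → 0 ≤ c i) {f : Finset V → ℝ}
    (hf : IsFracCover t G f) : 0 ≤ cliqueCost c f := by
  refine sum_nonneg fun K _ => ?_
  rcases K.eq_empty_or_nonempty with rfl | hK
  · rw [hf.2.1 ∅ fun h => not_nonempty_empty h.1, mul_zero]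
  · exact mul_nonneg (hc _ hK.card_pos) (hf.1 K)

lemma thetaFrac_le_cliqueCost (hc : ∀ i, 1 ≤ i → 0 ≤ c i) {f : Finset V → ℝ}
    (hf : IsFracCover t G f) : thetaFrac t G c ≤ cliqueCost c f := by
  refine csInf_le ⟨0, ?_⟩ ⟨f, hf, rfl⟩
  rintro _ ⟨f', hf', rfl⟩
  exact cliqueCost_nonneg hc hf'

lemma exists_isFracCover (ht : 0 < t) : ∃ f, IsFracCover t G f := by
  refine ⟨fun K => if IsCliqueOf G K then 1 else 0, fun K => by positivity, fun K hK => if_neg hK,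
    fun T hTt hT => ?_⟩
  have hTc : IsCliqueOf G T := ⟨card_pos.1 (hTt ▸ ht), hT⟩
  calc (1 : ℝ) = if IsCliqueOf G T then 1 else 0 := (if_pos hTc).symm
    _ ≤ _ := single_le_sum (f := fun K => if IsCliqueOf G K then (1 : ℝ) else 0)
      (fun K _ => by positivity) (mem_filter.2 ⟨mem_univ _, subset_rfl⟩)

lemma exists_cliqueCost_lt (ht : 0 < t) {ε : ℝ} (hε : 0 < ε) :
    ∃ f, IsFracCover t G f ∧ cliqueCost c f < thetaFrac t G c + ε := by
  obtain ⟨f₀, hf₀⟩ := exists_isFracCover (G := G) ht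
  have hne : {x | ∃ f, IsFracCover t G f ∧ x = cliqueCost c f}.Nonempty := ⟨_, f₀, hf₀, rfl⟩
  obtain ⟨_, ⟨f, hf, rfl⟩, hlt⟩ :=
    exists_lt_of_csInf_lt hne (lt_add_of_pos_right (thetaFrac t G c) hε)
  exact ⟨f, hf, hlt⟩

theorem exists_thetaFrac_le_zykovSymm (ht : 0 < t) (hc : ∀ i, 1 ≤ i → 0 ≤ c i) {S : Finset V}
    (hS : S.Nonempty) (hind : ∀ a ∈ S, ∀ b ∈ S, ¬ G.Adj a b) :
    ∃ x ∈ S, thetaFrac t G c ≤ thetaFrac t (G.zykovSymm S x) c := by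
  obtain ⟨x₀, hx₀, hmax⟩ := S.exists_max_image (fun x => thetaFrac t (G.zykovSymm S x) c) hS
  refine ⟨x₀, hx₀, le_of_forall_pos_le_add fun ε hε => ?_⟩
  choose g hg hcost using fun x => exists_cliqueCost_lt (G := G.zykovSymm S x) (c := c) ht hε
  have hSpos : (0 : ℝ) < S.card := by exact_mod_cast hS.card_pos
  calc thetaFrac t G c ≤ cliqueCost c (foldAverage S g) :=
        thetaFrac_le_cliqueCost hc (isFracCover_foldAverage hS hind fun x _ => hg x)
    _ = (S.card : ℝ)⁻¹ * ∑ x ∈ S, cliqueCost c (g x) := cliqueCost_foldAverage c fun x _ => hg x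
    _ ≤ (S.card : ℝ)⁻¹ * ∑ _x ∈ S, (thetaFrac t (G.zykovSymm S x₀) c + ε) := by
        gcongr with x hx
        linarith [hcost x, hmax x hx]
    _ = _ := by rw [sum_const, nsmul_eq_mul, inv_mul_cancel_left₀ hSpos.ne']

end Theta

section Termination

variable {V : Type} [Fintype V] [DecidableEq V] {G : SimpleGraph V}

noncomputable def numNeighborSets (G : SimpleGraph V) : ℕ := (univ.image G.neighborSet).card

lemma numNeighborSets_zykovSymm_lt {S : Finset V} {x u v : V}
    (hS : ∀ a b, G.neighborSet a = G.neighborSet b → a ∈ S → b ∈ S) (hu : u ∈ S) (hv : v ∈ S)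
    (huv : G.neighborSet u ≠ G.neighborSet v) :
    numNeighborSets (G.zykovSymm S x) < numNeighborSets G := by
  let Ψ : Set V → Set V := fun M => if ∃ z ∈ S, G.neighborSet z = M then G.neighborSet x \ S
    else {b | if b ∈ S then x ∈ M else b ∈ M}
  have hΨ : ∀ a, (G.zykovSymm S x).neighborSet a = Ψ (G.neighborSet a) := by
    intro a
    by_cases ha : a ∈ S
    · simp only [Ψ, if_pos (⟨a, ha, rfl⟩ : ∃ z ∈ S, G.neighborSet z = G.neighborSet a)]
      ext b
      simp [SimpleGraph.zykovSymm_adj_of_mem ha, and_comm]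
    · have hnot : ¬ ∃ z ∈ S, G.neighborSet z = G.neighborSet a :=
        fun ⟨z, hz, h⟩ => ha (hS z a h hz)
      simp only [Ψ, hnot, if_false]
      ext b
      by_cases hb : b ∈ S
      · simp [SimpleGraph.zykovSymm_adj_of_notMem_of_mem ha hb, hb]
      · simp [SimpleGraph.zykovSymm_adj_of_notMem ha hb, hb]
  have hcollapse : Ψ (G.neighborSet u) = Ψ (G.neighborSet v) := by
    simp only [Ψ, if_pos (⟨u, hu, rfl⟩ : ∃ z ∈ S, G.neighborSet z = G.neighborSet u),
      if_pos (⟨v, hv, rfl⟩ : ∃ z ∈ S, G.neighborSet z = G.neighborSet v)]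
  have himage : univ.image (G.zykovSymm S x).neighborSet =
      (univ.image G.neighborSet).image Ψ := by
    rw [image_image]
    exact image_congr fun a _ => hΨ a
  rw [numNeighborSets, numNeighborSets, himage]
  refine card_image_le.lt_of_ne fun h => huv (card_image_iff.1 h ?_ ?_ hcollapse) <;>
    exact mem_coe.2 (mem_image_of_mem _ (mem_univ _))

lemma isCompleteMultipartite_of_neighborSet_eq
    (h : ∀ u v, ¬ G.Adj u v → G.neighborSet u = G.neighborSet v) : IsCompleteMultipartite G := by
  obtain ⟨e, he⟩ := Countable.exists_injective_nat (Set V)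
  refine ⟨e ∘ G.neighborSet, fun u v => ⟨fun huv hN => G.irrefl (v := v) ?_,
    fun hp => by_contra fun huv => hp (congrArg e (h u v huv))⟩⟩
  exact show v ∈ G.neighborSet v from he hN ▸ huv

theorem exists_isCompleteMultipartite_thetaFrac_le {t : ℕ} {c : ℕ → ℝ} (ht : 0 < t)
    (hc : ∀ i, 1 ≤ i → 0 ≤ c i) (G : SimpleGraph V) :
    ∃ H : SimpleGraph V, IsCompleteMultipartite H ∧ thetaFrac t G c ≤ thetaFrac t H c := by
  induction hk : numNeighborSets G using Nat.strong_induction_on generalizing G with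
  | _ k ih =>
  by_cases hG : ∀ u v, ¬ G.Adj u v → G.neighborSet u = G.neighborSet v
  · exact ⟨G, isCompleteMultipartite_of_neighborSet_eq hG, le_rfl⟩
  push Not at hG
  obtain ⟨u, v, huv, hne⟩ := hG
  set S := univ.filter fun a =>
    G.neighborSet a = G.neighborSet u ∨ G.neighborSet a = G.neighborSet v
  have hu : u ∈ S := by simp [S]
  have hv : v ∈ S := by simp [S]
  obtain ⟨x, hx, hle⟩ := exists_thetaFrac_le_zykovSymm ht hc ⟨u, hu⟩ fun a ha b hb =>
    SimpleGraph.not_adj_of_neighborSet_eq huv (mem_filter.1 ha).2 (mem_filter.1 hb).2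
  have hlt : numNeighborSets (G.zykovSymm S x) < k :=
    hk ▸ numNeighborSets_zykovSymm_lt (fun a b h ha => by simpa [S, h] using ha) hu hv hne
  obtain ⟨H, hH, hle'⟩ := ih _ hlt _ rfl
  exact ⟨H, hH, hle.trans hle'⟩

end Termination

/-- Theorem 1.7 (cover part): the fractional `t`-clique cover number of any
`n`-vertex graph is at most that of some `n`-vertex complete multipartite graph. -/
theorem stmt2 (n t : ℕ) (ht : 2 ≤ t) (c : ℕ → ℝ) (hc : ∀ i, 1 ≤ i → 0 ≤ c i)
    (G : SimpleGraph (Fin n)) :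
    ∃ H : SimpleGraph (Fin n), IsCompleteMultipartite H ∧
      thetaFrac t G c ≤ thetaFrac t H c :=
  exists_isCompleteMultipartite_thetaFrac_le (by omega) hc G
end

section
/- Let n ≥ 2 and let c = (c_i)_{i≥1} be a cost vector of nonnegative reals such that 2·c_i ≥ c_{i-1} + c_{i+1} for every i ≥ 2. Then for every complete multipartite graph H on n vertices, π*_2(H, c) ≤ π*_2(T_{n,2}, c), and moreover π*_2(T_{n,2}, c) = π_2(T_{n,2}, c). -/
open scoped Classical
open Finset

section Aux
variable {n : ℕ} (p : Fin n → ℕ)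

def parts : Finset ℕ := Finset.image p Finset.univ

noncomputable def fib (i : ℕ) : Finset (Fin n) := Finset.univ.filter (fun v => p v = i)

noncomputable def asz (i : ℕ) : ℕ := (fib p i).card

noncomputable def trv (R : Finset ℕ) : Finset (Finset (Fin n)) :=
  Finset.univ.filter (fun E => (∀ v ∈ E, p v ∈ R) ∧ ∀ u ∈ E, ∀ v ∈ E, p u = p v → u = v)

lemma mem_trv {R : Finset ℕ} {E : Finset (Fin n)} :
    E ∈ trv p R ↔ (∀ v ∈ E, p v ∈ R) ∧ ∀ u ∈ E, ∀ v ∈ E, p u = p v → u = v := by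
  simp [trv]

lemma trv_sum (A : ℕ) (R : Finset ℕ) (hA : ∀ i ∈ R, asz p i ≤ A) :
    ∑ E ∈ trv p R, ∏ i ∈ R \ E.image p, ((A : ℝ) - asz p i) = (A : ℝ) ^ R.card := by
  induction R using Finset.induction_on with
  | empty =>
    have : trv p (∅ : Finset ℕ) = {∅} := by
      ext E
      simp only [mem_trv, Finset.mem_singleton]
      constructor
      · rintro ⟨h1, -⟩
        by_contra hne
        obtain ⟨v, hv⟩ := Finset.nonempty_of_ne_empty hne
        exact absurd (h1 v hv) (by simp)
      · rintro rfl; simp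
    simp [this]
  | @insert i R hiR ih =>
    have hsplit := Finset.sum_filter_add_sum_filter_not (trv p (insert i R))
      (fun E => ∀ v ∈ E, p v ≠ i)
      (fun E => ∏ j ∈ (insert i R) \ E.image p, ((A : ℝ) - asz p j))
    rw [← hsplit]
    -- first part: E's avoiding part i
    have hset1 : (trv p (insert i R)).filter (fun E => ∀ v ∈ E, p v ≠ i) = trv p R := by
      ext E
      simp only [Finset.mem_filter, mem_trv]
      constructor
      · rintro ⟨⟨h1, h2⟩, h3⟩
        exact ⟨fun v hv => by
          have := h1 v hv
          rw [Finset.mem_insert] at this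
          rcases this with h | h
          · exact absurd h (h3 v hv)
          · exact h, h2⟩
      · rintro ⟨h1, h2⟩
        refine ⟨⟨fun v hv => Finset.mem_insert_of_mem (h1 v hv), h2⟩, fun v hv heq => hiR ?_⟩
        rw [← heq]; exact h1 v hv
    have hval1 : ∀ E ∈ trv p R,
        (∏ j ∈ (insert i R) \ E.image p, ((A : ℝ) - asz p j))
          = ((A : ℝ) - asz p i) * ∏ j ∈ R \ E.image p, ((A : ℝ) - asz p j) := by
      intro E hE
      rw [mem_trv] at hE
      have hnotmem : i ∉ E.image p := by
        simp only [Finset.mem_image, not_exists]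
        rintro v ⟨hv, hpv⟩
        exact hiR (by rw [← hpv]; exact hE.1 v hv)
      have : (insert i R) \ E.image p = insert i (R \ E.image p) := by
        rw [Finset.insert_sdiff_of_notMem _ hnotmem]
      rw [this, Finset.prod_insert (by simp [hiR])]
    -- second part: E's containing a vertex of part i
    have hset2 : ∑ E ∈ (trv p (insert i R)).filter (fun E => ¬ ∀ v ∈ E, p v ≠ i),
        (∏ j ∈ (insert i R) \ E.image p, ((A : ℝ) - asz p j))
        = ∑ ve ∈ (fib p i) ×ˢ trv p R, ∏ j ∈ R \ ve.2.image p, ((A : ℝ) - asz p j) := by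
      refine (Finset.sum_bij (fun ve _ => insert ve.1 ve.2) ?_ ?_ ?_ ?_).symm
      · rintro ⟨v, E⟩ hve
        simp only [Finset.mem_product, fib, Finset.mem_filter, Finset.mem_univ, true_and,
          mem_trv] at hve
        obtain ⟨hpv, h1, h2⟩ := hve
        simp only [Finset.mem_filter, mem_trv, not_forall]
        refine ⟨⟨?_, ?_⟩, ⟨v, Finset.mem_insert_self _ _, by simp [hpv]⟩⟩
        · intro w hw
          rcases Finset.mem_insert.1 hw with rfl | hw
          · simp [hpv]
          · exact Finset.mem_insert_of_mem (h1 w hw)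
        · intro u hu w hw heq
          have hui := Finset.mem_insert.1 hu
          have hwi := Finset.mem_insert.1 hw
          rcases hui with hu1 | hu2 <;> rcases hwi with hw1 | hw2
          · rw [hu1, hw1]
          · exfalso; apply hiR; rw [← hpv, ← hu1, heq]; exact h1 w hw2
          · exfalso; apply hiR; rw [← hpv, ← hw1, ← heq]; exact h1 u hu2
          · exact h2 u hu2 w hw2 heq
      · rintro ⟨v, E⟩ hve ⟨v', E'⟩ hve' heq
        simp only [Finset.mem_product, fib, Finset.mem_filter, Finset.mem_univ, true_and,
          mem_trv] at hve hve'
        obtain ⟨hpv, h1, h2⟩ := hve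
        obtain ⟨hpv', h1', h2'⟩ := hve'
        have hvE : v ∉ E := fun hv => hiR (hpv ▸ h1 v hv)
        have hvE' : v' ∉ E' := fun hv => hiR (hpv' ▸ h1' v' hv)
        have heq' : insert v E = insert v' E' := heq
        have hvv : v = v' := by
          have hv : v ∈ insert v' E' := heq' ▸ Finset.mem_insert_self v E
          rcases Finset.mem_insert.1 hv with h | h
          · exact h
          · exact absurd (show i ∈ R by rw [← hpv]; exact h1' v h) hiR
        subst hvv
        have hEE : E = E' := by
          have := congrArg (fun S => Finset.erase S v) heq'
          simpa [Finset.erase_insert hvE, Finset.erase_insert hvE'] using this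
        simp [hEE]
      · intro K hK
        simp only [Finset.mem_filter, mem_trv, not_forall] at hK
        obtain ⟨⟨h1, h2⟩, v, hv, hpv⟩ := hK
        rw [not_not] at hpv
        refine ⟨⟨v, K.erase v⟩, ?_, ?_⟩
        · simp only [Finset.mem_product, fib, Finset.mem_filter, Finset.mem_univ, true_and,
            mem_trv]
          refine ⟨hpv, fun w hw => ?_, fun u hu w hw => h2 u (Finset.mem_of_mem_erase hu) w (Finset.mem_of_mem_erase hw)⟩
          have hwK := Finset.mem_of_mem_erase hw
          have := h1 w hwK
          rcases Finset.mem_insert.1 this with h | h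
          · exfalso
            have : w = v := h2 w hwK v hv (by rw [h, hpv])
            exact (Finset.ne_of_mem_erase hw) this
          · exact h
        · exact Finset.insert_erase hv
      · rintro ⟨v, E⟩ hve
        simp only [Finset.mem_product, fib, Finset.mem_filter, Finset.mem_univ, true_and,
          mem_trv] at hve
        obtain ⟨hpv, h1, h2⟩ := hve
        have himg : (insert v E).image p = insert i (E.image p) := by
          rw [Finset.image_insert, hpv]
        rw [himg]
        congr 1
        ext j
        simp only [Finset.mem_sdiff, Finset.mem_insert]
        constructor
        · rintro ⟨h1, h2⟩
          exact ⟨Or.inr h1, fun hh => Or.elim hh (fun e => hiR (e ▸ h1)) h2⟩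
        · rintro ⟨h1 | h1, h2⟩
          · exact absurd (Or.inl h1) h2
          · exact ⟨h1, fun hh => h2 (Or.inr hh)⟩
    have ihR := ih (fun j hj => hA j (Finset.mem_insert_of_mem hj))
    rw [Finset.sum_congr hset1 hval1, ← Finset.mul_sum, ihR, hset2, Finset.sum_product]
    rw [Finset.sum_congr rfl (fun v _ => ihR), Finset.sum_const,
      Finset.card_insert_of_notMem hiR]
    show ((A : ℝ) - asz p i) * (A : ℝ) ^ R.card + (asz p i) • ((A : ℝ) ^ R.card) = _
    rw [nsmul_eq_mul, pow_succ]
    ring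
end Aux

section FW
variable {n : ℕ} (p : Fin n → ℕ)

noncomputable def fW (i₀ : ℕ) : Finset (Fin n) → ℝ := fun K =>
  if 2 ≤ K.card ∧ (∀ u ∈ K, ∀ v ∈ K, p u = p v → u = v) ∧ i₀ ∈ K.image p
  then (∏ i ∈ (parts p) \ K.image p, ((asz p i₀ : ℝ) - asz p i)) / (asz p i₀ : ℝ) ^ ((parts p).card - 2)
  else 0

lemma imageT_subset (T : Finset (Fin n)) : T.image p ⊆ parts p := by
  intro i hi
  obtain ⟨v, _, hv⟩ := Finset.mem_image.1 hi
  exact Finset.mem_image.2 ⟨v, Finset.mem_univ v, hv⟩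

lemma asz_pos {i₀ : ℕ} (h : i₀ ∈ parts p) : 0 < asz p i₀ := by
  obtain ⟨v, _, hv⟩ := Finset.mem_image.1 h
  exact Finset.card_pos.2 ⟨v, by simp [fib, hv]⟩

lemma fW_nonneg (i₀ : ℕ) (hmax : ∀ i ∈ parts p, asz p i ≤ asz p i₀) (K : Finset (Fin n)) :
    0 ≤ fW p i₀ K := by
  unfold fW
  split
  · apply div_nonneg
    · apply Finset.prod_nonneg
      intro i hi
      have := hmax i (Finset.mem_sdiff.1 hi).1
      have : (asz p i : ℝ) ≤ asz p i₀ := by exact_mod_cast this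
      linarith
    · positivity
  · exact le_refl 0

lemma covA (i₀ : ℕ) (hmax : ∀ i ∈ parts p, asz p i ≤ asz p i₀)
    (T : Finset (Fin n)) (hTc : T.card = 2)
    (hTinj : ∀ u ∈ T, ∀ v ∈ T, p u = p v → u = v) (hi₀T : i₀ ∈ T.image p) :
    ∑ K ∈ Finset.univ.filter (fun K => T ⊆ K), fW p i₀ K = 1 := by
  have hTsub : T.image p ⊆ parts p := imageT_subset p T
  have hApos : 0 < asz p i₀ := asz_pos p (hTsub hi₀T)
  have hcardim : (T.image p).card = 2 := by
    rw [Finset.card_image_of_injOn fun u hu v hv h =>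
      hTinj u (Finset.mem_coe.1 hu) v (Finset.mem_coe.1 hv) h, hTc]
  have hcardR : (parts p \ T.image p).card = (parts p).card - 2 := by
    rw [Finset.card_sdiff_of_subset hTsub, hcardim]
  simp only [fW]
  rw [Finset.sum_ite, Finset.sum_const_zero, add_zero, Finset.filter_filter]
  have key : ∑ K ∈ Finset.univ.filter (fun K => T ⊆ K ∧
        (2 ≤ K.card ∧ (∀ u ∈ K, ∀ v ∈ K, p u = p v → u = v) ∧ i₀ ∈ K.image p)),
        (∏ i ∈ parts p \ K.image p, ((asz p i₀ : ℝ) - asz p i))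
      = ∑ E ∈ trv p (parts p \ T.image p),
        ∏ i ∈ (parts p \ T.image p) \ E.image p, ((asz p i₀ : ℝ) - asz p i) := by
    refine (Finset.sum_bij (fun E _ => T ∪ E) ?_ ?_ ?_ ?_).symm
    · intro E hE
      rw [mem_trv] at hE
      obtain ⟨hE1, hE2⟩ := hE
      have hdisj : ∀ v ∈ E, v ∉ T := by
        intro v hv hvT
        have : p v ∈ T.image p := Finset.mem_image.2 ⟨v, hvT, rfl⟩
        exact (Finset.mem_sdiff.1 (hE1 v hv)).2 this
      simp only [Finset.mem_filter, Finset.mem_univ, true_and]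
      refine ⟨Finset.subset_union_left, ?_, ?_, ?_⟩
      · calc 2 = T.card := hTc.symm
          _ ≤ (T ∪ E).card := Finset.card_le_card Finset.subset_union_left
      · intro u hu v hv heq
        rcases Finset.mem_union.1 hu with hu | hu <;> rcases Finset.mem_union.1 hv with hv | hv
        · exact hTinj u hu v hv heq
        · exact absurd (Finset.mem_image.2 ⟨u, hu, heq⟩)
            (Finset.mem_sdiff.1 (hE1 v hv)).2
        · exact absurd (Finset.mem_image.2 ⟨v, hv, heq.symm⟩)
            (Finset.mem_sdiff.1 (hE1 u hu)).2
        · exact hE2 u hu v hv heq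
      · rw [Finset.image_union]
        exact Finset.mem_union_left _ hi₀T
    · intro E hE E' hE' heq
      rw [mem_trv] at hE hE'
      have heq' : T ∪ E = T ∪ E' := heq
      have hd : Disjoint T E := by
        rw [Finset.disjoint_right]
        intro v hv hvT
        exact (Finset.mem_sdiff.1 (hE.1 v hv)).2 (Finset.mem_image.2 ⟨v, hvT, rfl⟩)
      have hd' : Disjoint T E' := by
        rw [Finset.disjoint_right]
        intro v hv hvT
        exact (Finset.mem_sdiff.1 (hE'.1 v hv)).2 (Finset.mem_image.2 ⟨v, hvT, rfl⟩)
      rw [← Finset.union_sdiff_cancel_left hd, ← Finset.union_sdiff_cancel_left hd', heq']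
    · intro K hK
      simp only [Finset.mem_filter, Finset.mem_univ, true_and] at hK
      obtain ⟨hTK, _, hKinj, _⟩ := hK
      refine ⟨K \ T, ?_, ?_⟩
      · rw [mem_trv]
        constructor
        · intro v hv
          obtain ⟨hvK, hvT⟩ := Finset.mem_sdiff.1 hv
          rw [Finset.mem_sdiff]
          refine ⟨Finset.mem_image.2 ⟨v, Finset.mem_univ v, rfl⟩, ?_⟩
          intro him
          obtain ⟨t, htT, hpt⟩ := Finset.mem_image.1 him
          exact hvT (hKinj v hvK t (hTK htT) hpt.symm ▸ htT)
        · intro u hu v hv heq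
          exact hKinj u (Finset.mem_sdiff.1 hu).1 v (Finset.mem_sdiff.1 hv).1 heq
      · exact Finset.union_sdiff_of_subset hTK
    · intro E hE
      rw [mem_trv] at hE
      congr 1
      rw [Finset.image_union]
      ext j
      simp only [Finset.mem_sdiff, Finset.mem_union]
      constructor
      · rintro ⟨⟨hj1, hj2⟩, hj3⟩
        exact ⟨hj1, fun h => h.elim (fun h => hj2 h) (fun h => hj3 h)⟩
      · rintro ⟨hj1, hj2⟩
        exact ⟨⟨hj1, fun h => hj2 (Or.inl h)⟩, fun h => hj2 (Or.inr h)⟩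
  rw [← Finset.sum_div, key,
    trv_sum p (asz p i₀) _ (fun i hi => hmax i (Finset.mem_sdiff.1 hi).1), hcardR,
    div_self (pow_ne_zero _ (by exact_mod_cast hApos.ne'))]

lemma covB (i₀ : ℕ) (hi₀ : i₀ ∈ parts p) (hmax : ∀ i ∈ parts p, asz p i ≤ asz p i₀)
    (T : Finset (Fin n)) (hTne : T.Nonempty)
    (hTinj : ∀ u ∈ T, ∀ v ∈ T, p u = p v → u = v) (hi₀T : i₀ ∉ T.image p) :
    ∑ K ∈ Finset.univ.filter (fun K => T ⊆ K), fW p i₀ K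
      = (asz p i₀ : ℝ) ^ ((parts p \ insert i₀ (T.image p)).card + 1)
        / (asz p i₀ : ℝ) ^ ((parts p).card - 2) := by
  simp only [fW]
  rw [Finset.sum_ite, Finset.sum_const_zero, add_zero, Finset.filter_filter]
  have key : ∑ K ∈ Finset.univ.filter (fun K => T ⊆ K ∧
        (2 ≤ K.card ∧ (∀ u ∈ K, ∀ v ∈ K, p u = p v → u = v) ∧ i₀ ∈ K.image p)),
        (∏ i ∈ parts p \ K.image p, ((asz p i₀ : ℝ) - asz p i))
      = ∑ ve ∈ (fib p i₀) ×ˢ trv p (parts p \ insert i₀ (T.image p)),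
        ∏ i ∈ (parts p \ insert i₀ (T.image p)) \ ve.2.image p, ((asz p i₀ : ℝ) - asz p i) := by
    refine (Finset.sum_bij (fun ve _ => insert ve.1 (T ∪ ve.2)) ?_ ?_ ?_ ?_).symm
    · rintro ⟨w, E⟩ hve
      simp only [Finset.mem_product, fib, Finset.mem_filter, Finset.mem_univ, true_and,
        mem_trv] at hve
      obtain ⟨hpw, hE1, hE2⟩ := hve
      have hEi : ∀ v ∈ E, p v ≠ i₀ ∧ p v ∉ T.image p := by
        intro v hv
        have := (Finset.mem_sdiff.1 (hE1 v hv)).2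
        simp only [Finset.mem_insert, not_or] at this
        exact this
      have hwT : w ∉ T := fun h => hi₀T (Finset.mem_image.2 ⟨w, h, hpw⟩)
      have hwE : w ∉ E := fun h => (hEi w h).1 hpw
      simp only [Finset.mem_filter, Finset.mem_univ, true_and]
      obtain ⟨t, htT⟩ := hTne
      refine ⟨fun v hv => Finset.mem_insert_of_mem (Finset.mem_union_left _ hv), ?_, ?_, ?_⟩
      · exact Finset.one_lt_card.2 ⟨w, Finset.mem_insert_self _ _,
          t, Finset.mem_insert_of_mem (Finset.mem_union_left _ htT), fun h => hwT (h ▸ htT)⟩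
      · intro u hu v hv heq
        have hmem : ∀ x, x ∈ insert w (T ∪ E) → x = w ∨ x ∈ T ∨ x ∈ E := by
          intro x hx
          rcases Finset.mem_insert.1 hx with h | h
          · exact Or.inl h
          · rcases Finset.mem_union.1 h with h | h
            · exact Or.inr (Or.inl h)
            · exact Or.inr (Or.inr h)
        have hpval : ∀ x, x ∈ insert w (T ∪ E) → x ≠ w → x ∉ T → x ∈ E := by
          intro x hx h1 h2
          rcases hmem x hx with h | h | h
          · exact absurd h h1
          · exact absurd h h2
          · exact h
        rcases hmem u hu with hu1 | hu1 | hu1 <;> rcases hmem v hv with hv1 | hv1 | hv1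
        · rw [hu1, hv1]
        · exfalso; apply hi₀T
          exact Finset.mem_image.2 ⟨v, hv1, by rw [← heq, hu1, hpw]⟩
        · exfalso; exact (hEi v hv1).1 (by rw [← heq, hu1, hpw])
        · exfalso; apply hi₀T
          exact Finset.mem_image.2 ⟨u, hu1, by rw [heq, hv1, hpw]⟩
        · exact hTinj u hu1 v hv1 heq
        · exfalso; exact (hEi v hv1).2 (Finset.mem_image.2 ⟨u, hu1, heq⟩)
        · exfalso; exact (hEi u hu1).1 (by rw [heq, hv1, hpw])
        · exfalso; exact (hEi u hu1).2 (Finset.mem_image.2 ⟨v, hv1, heq.symm⟩)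
        · exact hE2 u hu1 v hv1 heq
      · exact Finset.mem_image.2 ⟨w, Finset.mem_insert_self _ _, hpw⟩
    · rintro ⟨w, E⟩ hve ⟨w', E'⟩ hve' heq
      simp only [Finset.mem_product, fib, Finset.mem_filter, Finset.mem_univ, true_and,
        mem_trv] at hve hve'
      obtain ⟨hpw, hE1, hE2⟩ := hve
      obtain ⟨hpw', hE1', hE2'⟩ := hve'
      have heq' : insert w (T ∪ E) = insert w' (T ∪ E') := heq
      have hEprop : ∀ (E₀ : Finset (Fin n)), (∀ v ∈ E₀, p v ∈ parts p \ insert i₀ (T.image p)) →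
          ∀ v ∈ E₀, p v ≠ i₀ ∧ p v ∉ T.image p := by
        intro E₀ h v hv
        have := (Finset.mem_sdiff.1 (h v hv)).2
        simp only [Finset.mem_insert, not_or] at this
        exact this
      have hww : w = w' := by
        have hw : w ∈ insert w' (T ∪ E') := heq' ▸ Finset.mem_insert_self _ _
        rcases Finset.mem_insert.1 hw with h | h
        · exact h
        · rcases Finset.mem_union.1 h with h | h
          · exact absurd (Finset.mem_image.2 ⟨w, h, hpw⟩) hi₀T
          · exact absurd hpw ((hEprop E' hE1' w h).1)
      subst hww
      have hEE : E = E' := by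
        ext v
        constructor
        · intro hv
          have hvK : v ∈ insert w (T ∪ E') := heq' ▸
            Finset.mem_insert_of_mem (Finset.mem_union_right _ hv)
          have hprop := hEprop E hE1 v hv
          rcases Finset.mem_insert.1 hvK with h | h
          · exact absurd (h ▸ hprop.1) (fun _ => (h ▸ hprop.1) hpw)
          · rcases Finset.mem_union.1 h with h | h
            · exact absurd (Finset.mem_image.2 ⟨v, h, rfl⟩) hprop.2
            · exact h
        · intro hv
          have hvK : v ∈ insert w (T ∪ E) := heq'.symm ▸
            Finset.mem_insert_of_mem (Finset.mem_union_right _ hv)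
          have hprop := hEprop E' hE1' v hv
          rcases Finset.mem_insert.1 hvK with h | h
          · exact absurd (h ▸ hprop.1) (fun _ => (h ▸ hprop.1) hpw)
          · rcases Finset.mem_union.1 h with h | h
            · exact absurd (Finset.mem_image.2 ⟨v, h, rfl⟩) hprop.2
            · exact h
      rw [hEE]
    · intro K hK
      simp only [Finset.mem_filter, Finset.mem_univ, true_and] at hK
      obtain ⟨hTK, _, hKinj, hi₀K⟩ := hK
      obtain ⟨w, hwK, hpw⟩ := Finset.mem_image.1 hi₀K
      refine ⟨⟨w, K \ insert w T⟩, ?_, ?_⟩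
      · simp only [Finset.mem_product, fib, Finset.mem_filter, Finset.mem_univ, true_and,
          mem_trv]
        refine ⟨hpw, fun v hv => ?_, fun u hu v hv heq =>
          hKinj u (Finset.mem_sdiff.1 hu).1 v (Finset.mem_sdiff.1 hv).1 heq⟩
        obtain ⟨hvK, hvT⟩ := Finset.mem_sdiff.1 hv
        simp only [Finset.mem_insert, not_or] at hvT
        rw [Finset.mem_sdiff]
        refine ⟨Finset.mem_image.2 ⟨v, Finset.mem_univ v, rfl⟩, ?_⟩
        simp only [Finset.mem_insert, not_or]
        constructor
        · intro h
          exact hvT.1 (hKinj v hvK w hwK (by rw [h, hpw]))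
        · intro h
          obtain ⟨t, htT, hpt⟩ := Finset.mem_image.1 h
          exact hvT.2 (hKinj v hvK t (hTK htT) hpt.symm ▸ htT)
      · ext v
        simp only [Finset.mem_insert, Finset.mem_union, Finset.mem_sdiff, Finset.mem_insert]
        constructor
        · rintro (rfl | hv | hv)
          · exact hwK
          · exact hTK hv
          · exact hv.1
        · intro hv
          by_cases h1 : v = w
          · exact Or.inl h1
          · by_cases h2 : v ∈ T
            · exact Or.inr (Or.inl h2)
            · exact Or.inr (Or.inr ⟨hv, by push_neg; exact ⟨h1, h2⟩⟩)
    · rintro ⟨w, E⟩ hve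
      simp only [Finset.mem_product, fib, Finset.mem_filter, Finset.mem_univ, true_and,
        mem_trv] at hve
      obtain ⟨hpw, hE1, hE2⟩ := hve
      congr 1
      have himg : (insert w (T ∪ E)).image p = insert i₀ (T.image p ∪ E.image p) := by
        rw [Finset.image_insert, Finset.image_union, hpw]
      rw [himg]
      ext j
      simp only [Finset.mem_sdiff, Finset.mem_insert, Finset.mem_union, not_or]
      tauto
  rw [← Finset.sum_div, key, Finset.sum_product]
  have hin : ∀ w ∈ fib p i₀,
      (∑ E ∈ trv p (parts p \ insert i₀ (T.image p)),
        ∏ i ∈ (parts p \ insert i₀ (T.image p)) \ E.image p, ((asz p i₀ : ℝ) - asz p i))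
      = (asz p i₀ : ℝ) ^ (parts p \ insert i₀ (T.image p)).card :=
    fun w _ => trv_sum p (asz p i₀) _ (fun i hi => hmax i (Finset.mem_sdiff.1 hi).1)
  rw [Finset.sum_congr rfl hin, Finset.sum_const]
  have : (fib p i₀).card = asz p i₀ := rfl
  rw [this, nsmul_eq_mul, pow_succ]
  ring_nf
end FW

lemma c_lin (c : ℕ → ℝ) (hc1 : 0 ≤ c 1)
    (hconc : ∀ i, 2 ≤ i → c (i - 1) + c (i + 1) ≤ 2 * c i) :
    ∀ s, 2 ≤ s → c s ≤ ((s : ℝ) - 1) * c 2 := by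
  have hstep : ∀ s, 2 ≤ s → c s ≤ c (s - 1) + (c 2 - c 1) := by
    intro s hs
    induction s, hs using Nat.le_induction with
    | base => simp
    | succ s hs ih =>
      have h := hconc s hs
      have hs1 : s + 1 - 1 = s := by omega
      rw [hs1]
      have hs2 : s - 1 + 1 = s := by omega
      -- c (s+1) ≤ 2 c s - c (s-1) ≤ c s + (c 2 - c 1)
      have : c s - c (s - 1) ≤ c 2 - c 1 := by linarith [ih]
      linarith [h]
  have main : ∀ s, 2 ≤ s → c s ≤ ((s : ℝ) - 1) * c 2 - ((s : ℝ) - 2) * c 1 := by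
    intro s hs
    induction s, hs using Nat.le_induction with
    | base => norm_num
    | succ s hs ih =>
      have h1 := hstep (s + 1) (by omega)
      have hs1 : s + 1 - 1 = s := by omega
      rw [hs1] at h1
      push_cast
      push_cast at ih
      linarith
  intro s hs
  have h1 := main s hs
  have h2 : (0 : ℝ) ≤ ((s : ℝ) - 2) * c 1 := by
    apply mul_nonneg _ hc1
    have : (2 : ℝ) ≤ (s : ℝ) := by exact_mod_cast hs
    linarith
  linarith

section FW2
variable {n : ℕ} (p : Fin n → ℕ)

lemma fW_zero_nonclique (i₀ : ℕ) (H : SimpleGraph (Fin n))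
    (hadj : ∀ u v, H.Adj u v ↔ p u ≠ p v) (K : Finset (Fin n))
    (hnc : ¬ IsCliqueOf H K) : fW p i₀ K = 0 := by
  rw [fW]
  split
  · rename_i h
    exfalso
    apply hnc
    constructor
    · exact Finset.card_pos.1 (by omega)
    · intro u hu v hv huv
      exact (hadj u v).2 (fun heq => huv (h.2.1 u (Finset.mem_coe.1 hu) v (Finset.mem_coe.1 hv) heq))
  · rfl

lemma fW_coverage (i₀ : ℕ) (hi₀ : i₀ ∈ parts p) (hmax : ∀ i ∈ parts p, asz p i ≤ asz p i₀)
    (H : SimpleGraph (Fin n)) (hadj : ∀ u v, H.Adj u v ↔ p u ≠ p v)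
    (T : Finset (Fin n)) (hTc : T.card = 2) (hTcl : H.IsClique (T : Set (Fin n))) :
    ∑ K ∈ Finset.univ.filter (fun K => T ⊆ K), fW p i₀ K = 1 := by
  have hTinj : ∀ u ∈ T, ∀ v ∈ T, p u = p v → u = v := by
    intro u hu v hv heq
    by_contra hne
    exact ((hadj u v).1 (hTcl (Finset.mem_coe.2 hu) (Finset.mem_coe.2 hv) hne)) heq
  by_cases hi₀T : i₀ ∈ T.image p
  · exact covA p i₀ hmax T hTc hTinj hi₀T
  · rw [covB p i₀ hi₀ hmax T (Finset.card_pos.1 (by omega)) hTinj hi₀T]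
    have hApos : 0 < asz p i₀ := asz_pos p hi₀
    have hsub : insert i₀ (T.image p) ⊆ parts p :=
      Finset.insert_subset hi₀ (imageT_subset p T)
    have hcardim : (T.image p).card = 2 := by
      rw [Finset.card_image_of_injOn fun u hu v hv h =>
        hTinj u (Finset.mem_coe.1 hu) v (Finset.mem_coe.1 hv) h, hTc]
    have hc3 : (insert i₀ (T.image p)).card = 3 := by
      rw [Finset.card_insert_of_notMem hi₀T, hcardim]
    have hk3 : 3 ≤ (parts p).card := hc3 ▸ Finset.card_le_card hsub
    have hcardR : (parts p \ insert i₀ (T.image p)).card = (parts p).card - 3 := by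
      rw [Finset.card_sdiff_of_subset hsub, hc3]
    rw [hcardR]
    have hexp : (parts p).card - 3 + 1 = (parts p).card - 2 := by omega
    rw [hexp, div_self (pow_ne_zero _ (by exact_mod_cast hApos.ne'))]

lemma fW_isFracDecomp (i₀ : ℕ) (hi₀ : i₀ ∈ parts p) (hmax : ∀ i ∈ parts p, asz p i ≤ asz p i₀)
    (H : SimpleGraph (Fin n)) (hadj : ∀ u v, H.Adj u v ↔ p u ≠ p v) :
    IsFracDecomp 2 H (fW p i₀) :=
  ⟨fW_nonneg p i₀ hmax, fW_zero_nonclique p i₀ H hadj,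
    fun T hTc hTcl => fW_coverage p i₀ hi₀ hmax H hadj T hTc hTcl⟩
end FW2



section Cost
variable {n : ℕ} (p : Fin n → ℕ)

lemma fW_single (i₀ : ℕ) (hi₀ : i₀ ∈ parts p) (hmax : ∀ i ∈ parts p, asz p i ≤ asz p i₀)
    (v : Fin n) (hv : p v ≠ i₀) :
    ∑ K ∈ Finset.univ.filter (fun K => ({v} : Finset (Fin n)) ⊆ K), fW p i₀ K
      = (asz p i₀ : ℝ) := by
  have hApos : 0 < asz p i₀ := asz_pos p hi₀
  have hinj : ∀ u ∈ ({v} : Finset (Fin n)), ∀ w ∈ ({v} : Finset (Fin n)), p u = p w → u = w := by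
    intro u hu w hw _
    rw [Finset.mem_singleton] at hu hw
    rw [hu, hw]
  have him : i₀ ∉ ({v} : Finset (Fin n)).image p := by
    rw [Finset.image_singleton, Finset.mem_singleton]
    exact fun h => hv h.symm
  rw [covB p i₀ hi₀ hmax {v} (Finset.singleton_nonempty v) hinj him]
  have hpv : p v ∈ parts p := Finset.mem_image.2 ⟨v, Finset.mem_univ v, rfl⟩
  have hsub : insert i₀ (({v} : Finset (Fin n)).image p) ⊆ parts p := by
    rw [Finset.image_singleton]
    exact Finset.insert_subset hi₀ (Finset.singleton_subset_iff.2 hpv)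
  have hc2 : (insert i₀ (({v} : Finset (Fin n)).image p)).card = 2 := by
    rw [Finset.image_singleton, Finset.card_insert_of_notMem (by
      rw [Finset.mem_singleton]; exact fun h => hv h.symm), Finset.card_singleton]
  have hk2 : 2 ≤ (parts p).card := hc2 ▸ Finset.card_le_card hsub
  have hcardR : (parts p \ insert i₀ (({v} : Finset (Fin n)).image p)).card
      = (parts p).card - 2 := by
    rw [Finset.card_sdiff_of_subset hsub, hc2]
  rw [hcardR, pow_succ, mul_comm, mul_div_assoc,
    div_self (pow_ne_zero _ (by exact_mod_cast hApos.ne')), mul_one]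

lemma fW_cost (i₀ : ℕ) (hi₀ : i₀ ∈ parts p) (hmax : ∀ i ∈ parts p, asz p i ≤ asz p i₀)
    (c : ℕ → ℝ) (hc2 : 0 ≤ c 2) (hlin : ∀ s, 2 ≤ s → c s ≤ ((s : ℝ) - 1) * c 2) :
    cliqueCost c (fW p i₀) ≤ (((n - asz p i₀) * asz p i₀ : ℕ) : ℝ) * c 2 := by
  have hApos : 0 < asz p i₀ := asz_pos p hi₀
  have step1 : cliqueCost c (fW p i₀)
      ≤ ∑ K : Finset (Fin n), ((K.card : ℝ) - 1) * c 2 * fW p i₀ K := by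
    unfold cliqueCost
    apply Finset.sum_le_sum
    intro K _
    by_cases h : (2 ≤ K.card ∧ (∀ u ∈ K, ∀ v ∈ K, p u = p v → u = v) ∧ i₀ ∈ K.image p)
    · exact mul_le_mul_of_nonneg_right (hlin K.card h.1) (fW_nonneg p i₀ hmax K)
    · rw [fW, if_neg h]
      simp
  have step2 : ∀ K : Finset (Fin n), ((K.card : ℝ) - 1) * c 2 * fW p i₀ K
      = c 2 * (((K.filter (fun v => p v ≠ i₀)).card : ℝ) * fW p i₀ K) := by
    intro K
    by_cases h : (2 ≤ K.card ∧ (∀ u ∈ K, ∀ v ∈ K, p u = p v → u = v) ∧ i₀ ∈ K.image p)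
    · obtain ⟨hcK, hinj, him⟩ := h
      obtain ⟨w, hwK, hpw⟩ := Finset.mem_image.1 him
      have h1 : K.filter (fun v => p v ≠ i₀) = K \ {w} := by
        ext v
        simp only [Finset.mem_filter, Finset.mem_sdiff, Finset.mem_singleton]
        constructor
        · rintro ⟨hvK, hpv⟩
          exact ⟨hvK, fun hh => hpv (hh ▸ hpw)⟩
        · rintro ⟨hvK, hvw⟩
          exact ⟨hvK, fun hh => hvw (hinj v hvK w hwK (by rw [hh, hpw]))⟩
      have h2 : (K.filter (fun v => p v ≠ i₀)).card = K.card - 1 := by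
        rw [h1, Finset.card_sdiff_of_subset (Finset.singleton_subset_iff.2 hwK), Finset.card_singleton]
      rw [h2]
      have hcast : ((K.card - 1 : ℕ) : ℝ) = (K.card : ℝ) - 1 := by
        have h3 : 1 ≤ K.card := by omega
        push_cast [h3]
        ring
      rw [hcast]
      ring
    · rw [fW, if_neg h]
      ring
  rw [Finset.sum_congr rfl (fun K _ => step2 K), ← Finset.mul_sum] at step1
  have hcard : ∀ K : Finset (Fin n), ((K.filter (fun v => p v ≠ i₀)).card : ℝ)
      = ∑ v ∈ Finset.univ.filter (fun v => p v ≠ i₀), (if v ∈ K then (1 : ℝ) else 0) := by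
    intro K
    have h1 : K.filter (fun v => p v ≠ i₀)
        = (Finset.univ.filter (fun v => p v ≠ i₀)).filter (fun v => v ∈ K) := by
      ext v
      simp only [Finset.mem_filter, Finset.mem_univ, true_and]
      tauto
    rw [h1, Finset.card_filter]
    push_cast
    rfl
  have step3 : ∑ K : Finset (Fin n), ((K.filter (fun v => p v ≠ i₀)).card : ℝ) * fW p i₀ K
      = ∑ v ∈ Finset.univ.filter (fun v => p v ≠ i₀),
          ∑ K ∈ Finset.univ.filter (fun K => ({v} : Finset (Fin n)) ⊆ K), fW p i₀ K := by
    rw [Finset.sum_congr rfl (fun K _ => by rw [hcard K, Finset.sum_mul])]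
    rw [Finset.sum_comm]
    apply Finset.sum_congr rfl
    intro v _
    rw [Finset.sum_filter]
    apply Finset.sum_congr rfl
    intro K _
    by_cases h : v ∈ K <;> simp [h, Finset.singleton_subset_iff]
  have step4 : ∑ v ∈ Finset.univ.filter (fun v => p v ≠ i₀),
      ∑ K ∈ Finset.univ.filter (fun K => ({v} : Finset (Fin n)) ⊆ K), fW p i₀ K
      = ((n - asz p i₀ : ℕ) : ℝ) * (asz p i₀ : ℝ) := by
    have hfc : (Finset.univ.filter (fun v => p v ≠ i₀)).card = n - asz p i₀ := by
      have h1 : Finset.univ.filter (fun v => p v ≠ i₀) = Finset.univ \ fib p i₀ := by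
        ext v
        simp [fib]
      rw [h1, Finset.card_sdiff_of_subset (Finset.subset_univ _), Finset.card_univ, Fintype.card_fin]
      rfl
    rw [Finset.sum_congr rfl (fun v hv => fW_single p i₀ hi₀ hmax v (Finset.mem_filter.1 hv).2),
      Finset.sum_const, hfc, nsmul_eq_mul]
  calc cliqueCost c (fW p i₀)
      ≤ c 2 * ∑ K : Finset (Fin n), ((K.filter (fun v => p v ≠ i₀)).card : ℝ) * fW p i₀ K :=
        step1
    _ = c 2 * (((n - asz p i₀ : ℕ) : ℝ) * (asz p i₀ : ℝ)) := by rw [step3, step4]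
    _ = (((n - asz p i₀) * asz p i₀ : ℕ) : ℝ) * c 2 := by push_cast; ring
end Cost



section Turan
variable (n : ℕ)

noncomputable def E2 : Finset (Finset (Fin n)) :=
  Finset.univ.filter (fun K => K.card = 2 ∧ (SimpleGraph.turanGraph n 2).IsClique (K : Set (Fin n)))

lemma turan_clique_card_le {K : Finset (Fin n)}
    (h : (SimpleGraph.turanGraph n 2).IsClique (K : Set (Fin n))) : K.card ≤ 2 := by
  have hinj : ∀ u ∈ K, ∀ v ∈ K, u.val % 2 = v.val % 2 → u = v := by
    intro u hu v hv heq
    by_contra hne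
    have hadj := h (Finset.mem_coe.2 hu) (Finset.mem_coe.2 hv) hne
    have : ¬ (u.val % 2 = v.val % 2) := by
      simpa [SimpleGraph.turanGraph] using hadj
    exact this heq
  have h1 : K.card = (K.image (fun v => v.val % 2)).card :=
    (Finset.card_image_of_injOn (fun u hu v hv heq =>
      hinj u (Finset.mem_coe.1 hu) v (Finset.mem_coe.1 hv) heq)).symm
  have h2 : K.image (fun v => v.val % 2) ⊆ Finset.range 2 := by
    intro x hx
    obtain ⟨v, _, rfl⟩ := Finset.mem_image.1 hx
    exact Finset.mem_range.2 (Nat.mod_lt _ (by norm_num))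
  calc K.card = (K.image (fun v => v.val % 2)).card := h1
    _ ≤ (Finset.range 2).card := Finset.card_le_card h2
    _ = 2 := Finset.card_range 2

lemma turan_decomp_edge (f : Finset (Fin n) → ℝ)
    (hf : IsFracDecomp 2 (SimpleGraph.turanGraph n 2) f) {T : Finset (Fin n)}
    (hT : T ∈ E2 n) : f T = 1 := by
  rw [E2, Finset.mem_filter] at hT
  obtain ⟨-, hTc, hTcl⟩ := hT
  have hcov := hf.2.2 T hTc hTcl
  rw [← hcov]
  rw [Finset.sum_eq_single T]
  · intro b hb hbne
    rw [Finset.mem_filter] at hb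
    have hss : T ⊂ b := Finset.ssubset_iff_subset_ne.2 ⟨hb.2, fun h => hbne h.symm⟩
    have hcb : 2 < b.card := hTc ▸ Finset.card_lt_card hss
    apply hf.2.1
    rintro ⟨-, hbcl⟩
    exact absurd (turan_clique_card_le n hbcl) (by omega)
  · intro hT
    exact absurd (Finset.mem_filter.2 ⟨Finset.mem_univ T, Finset.Subset.refl T⟩) hT

lemma indicator_isIntDecomp :
    IsIntDecomp 2 (SimpleGraph.turanGraph n 2)
      (fun K => if K ∈ E2 n then (1 : ℝ) else 0) := by
  refine ⟨⟨fun K => by dsimp only; split <;> norm_num, fun K hK => ?_, fun T hTc hTcl => ?_⟩,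
    fun K => by dsimp only; split <;> simp⟩
  · dsimp only
    rw [if_neg]
    intro hKE
    rw [E2, Finset.mem_filter] at hKE
    exact hK ⟨Finset.card_pos.1 (by omega), hKE.2.2⟩
  · have hTE : T ∈ E2 n := Finset.mem_filter.2 ⟨Finset.mem_univ T, hTc, hTcl⟩
    dsimp only
    rw [Finset.sum_eq_single T]
    · rw [if_pos hTE]
    · intro b hb hbne
      rw [Finset.mem_filter] at hb
      have hss : T ⊂ b := Finset.ssubset_iff_subset_ne.2 ⟨hb.2, fun h => hbne h.symm⟩
      have hcb : 2 < b.card := hTc ▸ Finset.card_lt_card hss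
      rw [if_neg]
      intro hbE
      rw [E2, Finset.mem_filter] at hbE
      omega
    · intro hT
      exact absurd (Finset.mem_filter.2 ⟨Finset.mem_univ T, Finset.Subset.refl T⟩) hT

lemma indicator_cost (c : ℕ → ℝ) :
    cliqueCost c (fun K => if K ∈ E2 n then (1 : ℝ) else 0) = ((E2 n).card : ℝ) * c 2 := by
  unfold cliqueCost
  rw [Finset.sum_congr rfl (fun K _ => by
    show c K.card * (if K ∈ E2 n then (1 : ℝ) else 0) = if K ∈ E2 n then c K.card else 0
    split <;> ring)]
  rw [← Finset.sum_filter, Finset.filter_univ_mem]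
  have h2 : ∑ K ∈ E2 n, c K.card = ∑ K ∈ E2 n, c 2 := by
    apply Finset.sum_congr rfl
    intro K hK
    rw [E2, Finset.mem_filter] at hK
    rw [hK.2.1]
  rw [h2, Finset.sum_const, nsmul_eq_mul]

lemma cost_nonneg_of_decomp {V : Type} [Fintype V] [DecidableEq V] (G : SimpleGraph V)
    (c : ℕ → ℝ) (hc : ∀ i, 1 ≤ i → 0 ≤ c i) (f : Finset V → ℝ)
    (hf : IsFracDecomp 2 G f) : 0 ≤ cliqueCost c f := by
  apply Finset.sum_nonneg
  intro K _
  rcases Finset.eq_empty_or_nonempty K with rfl | hne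
  · rw [hf.2.1 ∅ (fun h => by simpa using h.1)]
    simp
  · exact mul_nonneg (hc _ (Finset.card_pos.2 hne)) (hf.1 K)

lemma cost_lower (c : ℕ → ℝ) (hc : ∀ i, 1 ≤ i → 0 ≤ c i) (f : Finset (Fin n) → ℝ)
    (hf : IsFracDecomp 2 (SimpleGraph.turanGraph n 2) f) :
    ((E2 n).card : ℝ) * c 2 ≤ cliqueCost c f := by
  unfold cliqueCost
  have h1 : ∑ K ∈ E2 n, c K.card * f K ≤ ∑ K : Finset (Fin n), c K.card * f K := by
    apply Finset.sum_le_sum_of_subset_of_nonneg (Finset.subset_univ _)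
    intro K _ _
    rcases Finset.eq_empty_or_nonempty K with rfl | hne
    · rw [hf.2.1 ∅ (fun h => by simpa using h.1)]
      simp
    · exact mul_nonneg (hc _ (Finset.card_pos.2 hne)) (hf.1 K)
  refine le_trans (le_of_eq ?_) h1
  have h2 : ∑ K ∈ E2 n, c K.card * f K = ∑ K ∈ E2 n, c 2 := by
    apply Finset.sum_congr rfl
    intro K hK
    rw [turan_decomp_edge n f hf hK, (Finset.mem_filter.1 hK).2.1]
    ring
  rw [h2, Finset.sum_const, nsmul_eq_mul]

lemma piFrac_turan (c : ℕ → ℝ) (hc : ∀ i, 1 ≤ i → 0 ≤ c i) :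
    piFrac 2 (SimpleGraph.turanGraph n 2) c = ((E2 n).card : ℝ) * c 2 := by
  unfold piFrac
  have hmem : ((E2 n).card : ℝ) * c 2 ∈
      {x | ∃ f, IsFracDecomp 2 (SimpleGraph.turanGraph n 2) f ∧ x = cliqueCost c f} :=
    ⟨_, (indicator_isIntDecomp n).1, (indicator_cost n c).symm⟩
  have hlb : ∀ x ∈ {x | ∃ f, IsFracDecomp 2 (SimpleGraph.turanGraph n 2) f ∧ x = cliqueCost c f},
      ((E2 n).card : ℝ) * c 2 ≤ x := by
    rintro x ⟨f, hf, rfl⟩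
    exact cost_lower n c hc f hf
  exact le_antisymm (csInf_le ⟨_, hlb⟩ hmem) (le_csInf ⟨_, hmem⟩ hlb)

lemma piInt_turan (c : ℕ → ℝ) (hc : ∀ i, 1 ≤ i → 0 ≤ c i) :
    piInt 2 (SimpleGraph.turanGraph n 2) c = ((E2 n).card : ℝ) * c 2 := by
  unfold piInt
  have hmem : ((E2 n).card : ℝ) * c 2 ∈
      {x | ∃ f, IsIntDecomp 2 (SimpleGraph.turanGraph n 2) f ∧ x = cliqueCost c f} :=
    ⟨_, indicator_isIntDecomp n, (indicator_cost n c).symm⟩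
  have hlb : ∀ x ∈ {x | ∃ f, IsIntDecomp 2 (SimpleGraph.turanGraph n 2) f ∧ x = cliqueCost c f},
      ((E2 n).card : ℝ) * c 2 ≤ x := by
    rintro x ⟨f, hf, rfl⟩
    exact cost_lower n c hc f hf.1
  exact le_antisymm (csInf_le ⟨_, hlb⟩ hmem) (le_csInf ⟨_, hmem⟩ hlb)
end Turan



section Count

lemma count_mod (m : ℕ) : (((Finset.range m).filter (fun x => x % 2 = 0)).card = m - m / 2)
    ∧ (((Finset.range m).filter (fun x => x % 2 = 1)).card = m / 2) := by
  induction m with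
  | zero => simp
  | succ m ih =>
    have hnot : ∀ P : ℕ → Prop, m ∉ (Finset.range m).filter P := fun P h =>
      Finset.notMem_range_self (Finset.mem_of_mem_filter m h)
    rw [Finset.range_add_one, Finset.filter_insert, Finset.filter_insert]
    by_cases h : m % 2 = 0
    · rw [if_pos h, if_neg (by omega), Finset.card_insert_of_notMem
        (fun hcon => Finset.notMem_range_self (Finset.mem_of_mem_filter m hcon))]
      omega
    · rw [if_neg h, if_pos (by omega), Finset.card_insert_of_notMem
        (fun hcon => Finset.notMem_range_self (Finset.mem_of_mem_filter m hcon))]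
      omega

lemma card_parity (n : ℕ) :
    ((Finset.univ.filter (fun u : Fin n => u.val % 2 = 0)).card = n - n / 2)
    ∧ ((Finset.univ.filter (fun u : Fin n => u.val % 2 = 1)).card = n / 2) := by
  constructor
  all_goals {
    first
    | (rw [← (count_mod n).1]
       have h1 : (Finset.univ.filter (fun u : Fin n => u.val % 2 = 0)).image Fin.val
           = (Finset.range n).filter (fun x => x % 2 = 0) := by
         ext x
         simp only [Finset.mem_image, Finset.mem_filter, Finset.mem_univ, true_and,
           Finset.mem_range]
         constructor
         · rintro ⟨u, hu, rfl⟩; exact ⟨u.isLt, hu⟩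
         · rintro ⟨hx, hq⟩; exact ⟨⟨x, hx⟩, hq, rfl⟩
       rw [← h1, Finset.card_image_of_injective _ Fin.val_injective])
    | (rw [← (count_mod n).2]
       have h1 : (Finset.univ.filter (fun u : Fin n => u.val % 2 = 1)).image Fin.val
           = (Finset.range n).filter (fun x => x % 2 = 1) := by
         ext x
         simp only [Finset.mem_image, Finset.mem_filter, Finset.mem_univ, true_and,
           Finset.mem_range]
         constructor
         · rintro ⟨u, hu, rfl⟩; exact ⟨u.isLt, hu⟩
         · rintro ⟨hx, hq⟩; exact ⟨⟨x, hx⟩, hq, rfl⟩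
       rw [← h1, Finset.card_image_of_injective _ Fin.val_injective]) }

lemma E2_card (n : ℕ) : (E2 n).card = (n - n / 2) * (n / 2) := by
  set evens := Finset.univ.filter (fun u : Fin n => u.val % 2 = 0) with hev
  set odds := Finset.univ.filter (fun u : Fin n => u.val % 2 = 1) with hod
  have himg : E2 n = (evens ×ˢ odds).image (fun e => ({e.1, e.2} : Finset (Fin n))) := by
    ext K
    constructor
    · intro hK
      rw [E2, Finset.mem_filter] at hK
      obtain ⟨-, hc, hcl⟩ := hK
      obtain ⟨u, v, huv, rfl⟩ := Finset.card_eq_two.1 hc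
      have hadj := hcl (by simp) (by simp) huv
      have hmod : ¬ (u.val % 2 = v.val % 2) := by
        simpa [SimpleGraph.turanGraph] using hadj
      rw [Finset.mem_image]
      by_cases h : u.val % 2 = 0
      · have hv1 : v.val % 2 = 1 := by omega
        exact ⟨(u, v), Finset.mem_product.2
          ⟨Finset.mem_filter.2 ⟨Finset.mem_univ _, h⟩,
           Finset.mem_filter.2 ⟨Finset.mem_univ _, hv1⟩⟩, rfl⟩
      · have hv0 : v.val % 2 = 0 := by omega
        have hu1 : u.val % 2 = 1 := by omega
        exact ⟨(v, u), Finset.mem_product.2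
          ⟨Finset.mem_filter.2 ⟨Finset.mem_univ _, hv0⟩,
           Finset.mem_filter.2 ⟨Finset.mem_univ _, hu1⟩⟩, Finset.pair_comm v u⟩
    · intro hK
      obtain ⟨⟨u, v⟩, he, rfl⟩ := Finset.mem_image.1 hK
      obtain ⟨hu, hv⟩ := Finset.mem_product.1 he
      have hu2 : u.val % 2 = 0 := (Finset.mem_filter.1 hu).2
      have hv2 : v.val % 2 = 1 := (Finset.mem_filter.1 hv).2
      have hne : u ≠ v := fun h => by rw [h] at hu2; omega
      have hadj : (SimpleGraph.turanGraph n 2).Adj u v := by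
        simp only [SimpleGraph.turanGraph]
        omega
      rw [E2, Finset.mem_filter]
      refine ⟨Finset.mem_univ _, Finset.card_pair hne, ?_⟩
      intro x hx y hy hxy
      simp only [Finset.coe_insert, Set.mem_insert_iff, Finset.coe_singleton,
        Set.mem_singleton_iff] at hx hy
      rcases hx with rfl | rfl <;> rcases hy with rfl | rfl
      · exact absurd rfl hxy
      · exact hadj
      · exact hadj.symm
      · exact absurd rfl hxy
  have hinj : Set.InjOn (fun e : Fin n × Fin n => ({e.1, e.2} : Finset (Fin n)))
      ↑(evens ×ˢ odds) := by
    rintro ⟨u, v⟩ he ⟨u', v'⟩ he' heq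
    have he1 := (Finset.mem_product.1 (Finset.mem_coe.1 he)).1
    have he2 := (Finset.mem_product.1 (Finset.mem_coe.1 he)).2
    have hf1 := (Finset.mem_product.1 (Finset.mem_coe.1 he')).1
    have hf2 := (Finset.mem_product.1 (Finset.mem_coe.1 he')).2
    have hu2 : u.val % 2 = 0 := (Finset.mem_filter.1 he1).2
    have hv2 : v.val % 2 = 1 := (Finset.mem_filter.1 he2).2
    have hu'2 : u'.val % 2 = 0 := (Finset.mem_filter.1 hf1).2
    have hv'2 : v'.val % 2 = 1 := (Finset.mem_filter.1 hf2).2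
    have heq' : ({u, v} : Finset (Fin n)) = {u', v'} := heq
    have hu : u ∈ ({u', v'} : Finset (Fin n)) := heq' ▸ Finset.mem_insert_self u {v}
    have hv : v ∈ ({u', v'} : Finset (Fin n)) := heq' ▸
      Finset.mem_insert_of_mem (Finset.mem_singleton_self v)
    have huu : u = u' := by
      rcases Finset.mem_insert.1 hu with h | h
      · exact h
      · rw [Finset.mem_singleton] at h
        rw [h] at hu2
        omega
    have hvv : v = v' := by
      rcases Finset.mem_insert.1 hv with h | h
      · rw [h] at hv2
        omega
      · exact Finset.mem_singleton.1 h
    rw [Prod.ext_iff]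
    exact ⟨huu, hvv⟩
  rw [himg, Finset.card_image_of_injOn hinj, Finset.card_product,
    (card_parity n).1, (card_parity n).2]

lemma keyineq (n A : ℕ) (hA : A ≤ n) : (n - A) * A ≤ (n - n / 2) * (n / 2) := by
  set m := n / 2 with hm
  have h1 : 2 * m ≤ n := by omega
  have h2 : n ≤ 2 * m + 1 := by omega
  have h3 : m ≤ n := by omega
  zify [hA, h3]
  have hA' : (A : ℤ) ≤ n := by exact_mod_cast hA
  have h1' : 2 * (m : ℤ) ≤ n := by exact_mod_cast h1
  have h2' : (n : ℤ) ≤ 2 * m + 1 := by exact_mod_cast h2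
  rcases le_or_gt A m with h | h
  · have h' : (A : ℤ) ≤ m := by exact_mod_cast h
    have hprod : (0 : ℤ) ≤ ((n : ℤ) - m - A) * ((m : ℤ) - A) :=
      mul_nonneg (by linarith) (by linarith)
    nlinarith [hprod]
  · have h' : (m : ℤ) + 1 ≤ A := by exact_mod_cast h
    have hprod : (0 : ℤ) ≤ ((A : ℤ) - m) * ((A : ℤ) + m - n) :=
      mul_nonneg (by linarith) (by linarith)
    nlinarith [hprod]
end Count


/-- Theorem 1.8 (ii): if `2 c_i ≥ c_{i-1} + c_{i+1}` for all `i ≥ 2`, then among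
complete multipartite graphs the Turán graph `T_{n,2}` maximizes the fractional
`2`-clique decomposition number, and for `T_{n,2}` the fractional and integer
decomposition numbers agree. -/
theorem stmt5 (n : ℕ) (hn : 2 ≤ n) (c : ℕ → ℝ) (hc : ∀ i, 1 ≤ i → 0 ≤ c i)
    (hconc : ∀ i, 2 ≤ i → c (i - 1) + c (i + 1) ≤ 2 * c i)
    (H : SimpleGraph (Fin n)) (hH : IsCompleteMultipartite H) :
    piFrac 2 H c ≤ piFrac 2 (SimpleGraph.turanGraph n 2) c ∧
    piFrac 2 (SimpleGraph.turanGraph n 2) c =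
      piInt 2 (SimpleGraph.turanGraph n 2) c := by
  obtain ⟨p, hp⟩ := hH
  have hfr := piFrac_turan n c hc
  have hint := piInt_turan n c hc
  refine ⟨?_, by rw [hfr, hint]⟩
  have hne : (Finset.univ : Finset (Fin n)).Nonempty := ⟨⟨0, by omega⟩, Finset.mem_univ _⟩
  have hpne : (parts p).Nonempty := hne.image p
  obtain ⟨i₀, hi₀, hmax⟩ := Finset.exists_max_image (parts p) (asz p) hpne
  have hd := fW_isFracDecomp p i₀ hi₀ hmax H (fun u v => hp u v)
  have hcost := fW_cost p i₀ hi₀ hmax c (hc 2 (by norm_num)) (c_lin c (hc 1 le_rfl) hconc)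
  have hAn : asz p i₀ ≤ n := by
    have h1 := Finset.card_le_univ (fib p i₀)
    rw [Fintype.card_fin] at h1
    exact h1
  have hkey : (n - asz p i₀) * asz p i₀ ≤ (E2 n).card := by
    rw [E2_card n]
    exact keyineq n (asz p i₀) hAn
  have hbdd : BddBelow {x | ∃ f, IsFracDecomp 2 H f ∧ x = cliqueCost c f} := by
    refine ⟨0, ?_⟩
    rintro x ⟨f, hf, rfl⟩
    exact cost_nonneg_of_decomp H c hc f hf
  have hmem : cliqueCost c (fW p i₀) ∈ {x | ∃ f, IsFracDecomp 2 H f ∧ x = cliqueCost c f} :=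
    ⟨_, hd, rfl⟩
  calc piFrac 2 H c ≤ cliqueCost c (fW p i₀) := by
        unfold piFrac
        exact csInf_le hbdd hmem
    _ ≤ (((n - asz p i₀) * asz p i₀ : ℕ) : ℝ) * c 2 := hcost
    _ ≤ ((E2 n).card : ℝ) * c 2 := by
        apply mul_le_mul_of_nonneg_right _ (hc 2 (by norm_num))
        exact_mod_cast hkey
    _ = piFrac 2 (SimpleGraph.turanGraph n 2) c := hfr.symm
end
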